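/- If B is a binary anisotropic quadratic form over F with 2 × B hyperbolic and B represents a₁ ∈ F×, then B ≅ ⟨a₁, −a₁s₁⟩ for some s₁ ∈ F× which is a nonzero sum of two squares. -/

import Mathlib

open scoped TensorProduct Quaternion
open Module

universe u

section Defs
variable (F : Type u) [Field F]

def SumTwoSq (s : F) : Prop := s ≠ 0 ∧ ∃ a b : F, s = a ^ 2 + b ^ 2

def IsNonreal : Prop := ∃ (n : ℕ) (v : Fin n → F), ∑ i, v i ^ 2 = -1

def FormIsotropic {ι : Type} [Fintype ι] (w : ι → F) : Prop :=
  ∃ v : ι → F, v ≠ 0 ∧ ∑ i, w i * v i ^ 2 = 0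

def FormEquiv {ι κ : Type} [Fintype ι] [Fintype κ] (w : ι → F) (w' : κ → F) : Prop :=
  ∃ e : (ι → F) ≃ₗ[F] (κ → F), ∀ v : ι → F, ∑ j, w' j * (e v) j ^ 2 = ∑ i, w i * v i ^ 2

def FormHyperbolic {ι : Type} [Fintype ι] (w : ι → F) : Prop :=
  ∃ m : ℕ, FormEquiv F w (fun p : Fin m × Fin 2 => if p.2 = 0 then (1 : F) else -1)

def FormWittEquiv {ι κ : Type} [Fintype ι] [Fintype κ] (w : ι → F) (w' : κ → F) : Prop :=
  FormHyperbolic F (Sum.elim w (fun j => - w' j))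

def FormTorsion {ι : Type} [Fintype ι] (w : ι → F) : Prop :=
  ∃ k : ℕ, k ≠ 0 ∧ FormHyperbolic F (fun p : Fin k × ι => w p.2)

def FormInI2 {ι : Type} [Fintype ι] (w : ι → F) : Prop :=
  Even (Fintype.card ι) ∧
    IsSquare ((-1 : F) ^ (Fintype.card ι * (Fintype.card ι - 1) / 2) * ∏ i, w i)

def Pf2 (s t : F) : Fin 4 → F := ![1, -s, -t, s * t]

def UBound (u : ℕ) : Prop :=
  ∀ (ι : Type) [Fintype ι] (w : ι → F), (∀ i, w i ≠ 0) → FormTorsion F w →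
    ¬ FormIsotropic F w → Fintype.card ι ≤ u

def U2Bound (u : ℕ) : Prop :=
  ∀ (ι : Type) [Fintype ι] (w : ι → F), (∀ i, w i ≠ 0) →
    FormHyperbolic F (Sum.elim w w) → ¬ FormIsotropic F w → Fintype.card ι ≤ u

def BrEquiv (A B : Type u) [Ring A] [Algebra F A] [Ring B] [Algebra F B] : Prop :=
  ∃ n m : ℕ, n ≠ 0 ∧ m ≠ 0 ∧
    Nonempty (Matrix (Fin n) (Fin n) A ≃ₐ[F] Matrix (Fin m) (Fin m) B)

def SplitAlg (B : Type u) [Ring B] [Algebra F B] : Prop := BrEquiv F B F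

structure IndexWitness (A : Type u) [Ring A] [Algebra F A] (d : ℕ) where
  D : Type u
  [ringD : DivisionRing D]
  [algD : Algebra F D]
  rank : Module.finrank F D = d ^ 2
  equiv : BrEquiv F A D

def HasIndex (A : Type u) [Ring A] [Algebra F A] (d : ℕ) : Prop :=
  Nonempty (IndexWitness F A d)

structure CyclicAlgWitness (A : Type u) [Ring A] [Algebra F A] (d : ℕ) where
  K : Type u
  [fieldK : Field K]
  [algK : Algebra F K]
  emb : K →ₐ[F] A
  galois : IsGalois F K
  cyclic : IsCyclic (K ≃ₐ[F] K)
  deg : Module.finrank F K = d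
  rank : Module.finrank F A = d ^ 2

def IsCyclicAlg (A : Type u) [Ring A] [Algebra F A] (d : ℕ) : Prop :=
  IsSimpleRing A ∧ Algebra.IsCentral F A ∧ Nonempty (CyclicAlgWitness F A d)

structure CyclicDecompWitness (A : Type u) [Ring A] [Algebra F A] (n k : ℕ) where
  C : Fin k → Type u
  [ringC : ∀ i, Ring (C i)]
  [algC : ∀ i, Algebra F (C i)]
  cyclic : ∀ i, ∃ d, d ∣ n ∧ IsCyclicAlg F (C i) d
  equiv : BrEquiv F A (⨂[F] i, C i)

def Lambda2LE (l : ℕ) : Prop :=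
  ∀ (A : Type u) [Ring A] [Algebra F A], IsSimpleRing A → Algebra.IsCentral F A →
    FiniteDimensional F A → SplitAlg F (A ⊗[F] A) →
    ∃ m : ℕ, m ≤ l ∧ ∃ a b : Fin m → F, (∀ i, a i ≠ 0 ∧ b i ≠ 0) ∧
      BrEquiv F A (⨂[F] i : Fin m, ℍ[F, a i, b i])

def MuLE (l : ℕ) : Prop :=
  ∀ (A : Type u) [Ring A] [Algebra F A], IsSimpleRing A → Algebra.IsCentral F A →
    FiniteDimensional F A → SplitAlg F (⨂[F] _i : Fin 4, A) →
    ∃ m : ℕ, m ≤ l ∧ ∃ s t : Fin m → F, (∀ i, SumTwoSq F (s i) ∧ t i ≠ 0) ∧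
      BrEquiv F (A ⊗[F] A) (⨂[F] i : Fin m, ℍ[F, s i, t i])

def Lambda4LE (l : ℕ) : Prop :=
  ∀ (A : Type u) [Ring A] [Algebra F A], IsSimpleRing A → Algebra.IsCentral F A →
    FiniteDimensional F A → SplitAlg F (⨂[F] _i : Fin 4, A) →
    ∃ k : ℕ, k ≤ l ∧ Nonempty (CyclicDecompWitness F A 4 k)

end Defs

/-!
An isotropic vector of `B ⊥ B` yields `x, y` with `B(x) = c ≠ 0` and `B(y) = -c`. For
`B = ⟨a, b⟩` the identity `B(x) B(y) = B(x, y)² + ab · det(x, y)²` then reads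
`-c² = B(x, y)² + ab · det(x, y)²`, so `-ab` is a sum of two squares: directly when
`det(x, y) ≠ 0`, and otherwise because `-1 = (B(x, y) / c)²` is a square. Finally a binary form
`⟨a, b⟩` representing `r ≠ 0` is isometric to `⟨r, r a b⟩ = ⟨r, -r s⟩` with `s = -ab`.
-/

theorem mul_sq_add_mul_sq_mul_mul_sq_add_mul_sq {R : Type*} [CommRing R] (a b x₁ x₂ y₁ y₂ : R) :
    (a * x₁ ^ 2 + b * x₂ ^ 2) * (a * y₁ ^ 2 + b * y₂ ^ 2) =
      (a * x₁ * y₁ + b * x₂ * y₂) ^ 2 + a * b * (x₁ * y₂ - x₂ * y₁) ^ 2 := by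
  ring

section DiagonalForms

variable {F : Type u} [Field F]

theorem FormEquiv.trans {ι κ μ : Type} [Fintype ι] [Fintype κ] [Fintype μ] {w : ι → F}
    {w' : κ → F} {w'' : μ → F} (h : FormEquiv F w w') (h' : FormEquiv F w' w'') :
    FormEquiv F w w'' := by
  obtain ⟨e, he⟩ := h
  obtain ⟨e', he'⟩ := h'
  exact ⟨e.trans e', fun v => (he' (e v)).trans (he v)⟩

theorem formEquiv_comp_equiv {ι κ : Type} [Fintype ι] [Fintype κ] (k : κ ≃ ι) (w : ι → F) :
    FormEquiv F w (w ∘ k) :=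
  ⟨LinearEquiv.funCongrLeft F F k, fun v => Equiv.sum_comp k (fun i => w i * v i ^ 2)⟩

theorem FormIsotropic.of_formEquiv {ι κ : Type} [Fintype ι] [Fintype κ] {w : ι → F}
    {w' : κ → F} (h : FormIsotropic F w') (h' : FormEquiv F w w') : FormIsotropic F w := by
  obtain ⟨v, hv, hv0⟩ := h
  obtain ⟨e, he⟩ := h'
  refine ⟨e.symm v, by simpa using hv, ?_⟩
  rw [← he, LinearEquiv.apply_symm_apply, hv0]

theorem formIsotropic_hyperbolic {m : ℕ} (hm : m ≠ 0) :
    FormIsotropic F (fun p : Fin m × Fin 2 => if p.2 = 0 then (1 : F) else -1) := by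
  have : NeZero m := ⟨hm⟩
  refine ⟨1, one_ne_zero, ?_⟩
  simp [Fintype.sum_prod_type, Fin.sum_univ_two]

theorem FormHyperbolic.formIsotropic {ι : Type} [Fintype ι] [Nonempty ι] {w : ι → F}
    (h : FormHyperbolic F w) : FormIsotropic F w := by
  obtain ⟨m, e, he⟩ := h
  rcases eq_or_ne m 0 with rfl | hm
  · have : (1 : ι → F) = 0 := e.injective (Subsingleton.elim _ _)
    exact absurd (congrFun this (Classical.arbitrary ι)) one_ne_zero
  · exact (formIsotropic_hyperbolic hm).of_formEquiv ⟨e, he⟩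

theorem exists_represents_neg_of_formIsotropic_sumElim {ι κ : Type} [Fintype ι] [Fintype κ]
    {w : ι → F} {w' : κ → F} (hw : ¬ FormIsotropic F w) (hw' : ¬ FormIsotropic F w')
    (h : FormIsotropic F (Sum.elim w w')) :
    ∃ (x : ι → F) (y : κ → F),
      ∑ i, w i * x i ^ 2 ≠ 0 ∧ ∑ i, w i * x i ^ 2 + ∑ j, w' j * y j ^ 2 = 0 := by
  obtain ⟨u, hu, hu0⟩ := h
  simp only [Fintype.sum_sum_type, Sum.elim_inl, Sum.elim_inr] at hu0
  refine ⟨fun i => u (.inl i), fun j => u (.inr j), fun hx => hu ?_, hu0⟩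
  have hx0 : (fun i => u (.inl i)) = 0 := by
    by_contra hne
    exact hw ⟨_, hne, hx⟩
  have hy0 : (fun j => u (.inr j)) = 0 := by
    by_contra hne
    exact hw' ⟨_, hne, by linear_combination hu0 - hx⟩
  ext (i | j)
  exacts [congrFun hx0 i, congrFun hy0 j]

theorem exists_eq_sq_add_sq_of_sq_eq_neg_one (h2 : (2 : F) ≠ 0) {j : F} (hj : j ^ 2 = -1)
    (z : F) : ∃ a b : F, z = a ^ 2 + b ^ 2 :=
  ⟨(z + 1) / 2, j * (z - 1) / 2, by field_simp; linear_combination (-(z - 1) ^ 2) * hj⟩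

theorem sumTwoSq_neg_mul_of_represents_neg (h2 : (2 : F) ≠ 0) {a b : F} (ha : a ≠ 0)
    (hb : b ≠ 0) {x₁ x₂ y₁ y₂ : F} (hx : a * x₁ ^ 2 + b * x₂ ^ 2 ≠ 0)
    (hxy : a * x₁ ^ 2 + b * x₂ ^ 2 + (a * y₁ ^ 2 + b * y₂ ^ 2) = 0) :
    SumTwoSq F (-(a * b)) := by
  refine ⟨neg_ne_zero.2 (mul_ne_zero ha hb), ?_⟩
  set c := a * x₁ ^ 2 + b * x₂ ^ 2
  set A := a * x₁ * y₁ + b * x₂ * y₂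
  set D := x₁ * y₂ - x₂ * y₁
  have key : -c ^ 2 = A ^ 2 + a * b * D ^ 2 := by
    rw [← mul_sq_add_mul_sq_mul_mul_sq_add_mul_sq]
    linear_combination (-c) * hxy
  by_cases hD : D = 0
  · refine exists_eq_sq_add_sq_of_sq_eq_neg_one h2 (j := A / c) ?_ _
    rw [hD] at key
    field_simp
    linear_combination -key
  · exact ⟨c / D, A / D, by field_simp; linear_combination key⟩

theorem formEquiv_pair_of_represents (w p : Fin 2 → F)
    (hr : w 0 * p 0 ^ 2 + w 1 * p 1 ^ 2 ≠ 0) :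
    FormEquiv F w
      ![w 0 * p 0 ^ 2 + w 1 * p 1 ^ 2, (w 0 * p 0 ^ 2 + w 1 * p 1 ^ 2) * (w 0 * w 1)] := by
  set r := w 0 * p 0 ^ 2 + w 1 * p 1 ^ 2
  -- `v ↦ (B(p, v) / r, -det(p, v) / r)`, an isometry by `mul_sq_add_mul_sq_mul_mul_sq_add_mul_sq`
  set M : Matrix (Fin 2) (Fin 2) F := !![w 0 * p 0 / r, w 1 * p 1 / r; p 1 / r, -p 0 / r]
  have hM : LinearMap.det (Matrix.toLin' M) ≠ 0 := by
    rw [LinearMap.det_toLin', Matrix.det_fin_two_of]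
    convert neg_ne_zero.2 (inv_ne_zero hr) using 1
    field_simp
    ring
  refine ⟨(Matrix.toLin' M).equivOfDetNeZero hM, fun v => ?_⟩
  simp only [LinearEquiv.ofIsUnitDet_apply, Matrix.toLin'_apply, Matrix.mulVec, dotProduct,
    Matrix.of_apply, Matrix.cons_val', Matrix.cons_val_fin_one, Fin.sum_univ_two,
    Matrix.cons_val_zero, Matrix.cons_val_one, M]
  field_simp
  ring

end DiagonalForms

theorem binary_two_torsion_form (F : Type u) [Field F] (h2 : (2 : F) ≠ 0) (ι : Type)
    [Fintype ι] (hcard : Fintype.card ι = 2) (w : ι → F) (hreg : ∀ i, w i ≠ 0)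
    (haniso : ¬ FormIsotropic F w) (hhyp : FormHyperbolic F (Sum.elim w w))
    (a₁ : F) (ha : a₁ ≠ 0) (hrep : ∃ v : ι → F, ∑ i, w i * v i ^ 2 = a₁) :
    ∃ s : F, SumTwoSq F s ∧ FormEquiv F w ![a₁, -(a₁ * s)] := by
  obtain ⟨k⟩ : Nonempty (Fin 2 ≃ ι) := ⟨(Fintype.equivFinOfCardEq hcard).symm⟩
  have hsum (f : ι → F) : ∑ i, f i = f (k 0) + f (k 1) := by
    rw [← Equiv.sum_comp k f, Fin.sum_univ_two]
  have : Nonempty ι := ⟨k 0⟩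
  obtain ⟨x, y, hx, hxy⟩ :=
    exists_represents_neg_of_formIsotropic_sumElim haniso haniso hhyp.formIsotropic
  simp only [hsum] at hx hxy
  obtain ⟨p, rfl⟩ := hrep
  rw [hsum] at ha ⊢
  refine ⟨_, sumTwoSq_neg_mul_of_represents_neg h2 (hreg _) (hreg _) hx hxy, ?_⟩
  rw [mul_neg, neg_neg]
  exact (formEquiv_comp_equiv k w).trans (formEquiv_pair_of_represents (w ∘ k) (p ∘ k) ha)
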